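/- Let H be a Hopf algebra over a commutative ring k and A a right H-comodule algebra. Suppose there is a right H-comodule map φ:H→A with φ(1_H)=1_A. Then every relative (H,A)-Hopf module M is injective as a right H-comodule relative to k-split monomorphisms: for every H-comodule map i:N→P admitting a k-linear retraction, and every H-comodule map f:N→M, there exists an H-comodule map g:P→M with g∘i=f. -/

import Mathlib

/- STATEMENT 6 (classical version, Doi): over a commutative ring `k`, for a Hopf algebra
`H`, a right `H`-comodule algebra `A` and a right `H`-comodule map `φ : H → A` with
`φ(1) = 1`, every relative `(H,A)`-Hopf module is injective as a right `H`-comodule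
relative to `k`-split monomorphisms. -/

open TensorProduct

noncomputable section

/-- The bilinear map on tensor products induced by two bilinear maps. -/
def biTensor {k : Type*} [CommRing k] {M N P Q R S : Type*}
    [AddCommGroup M] [Module k M] [AddCommGroup N] [Module k N]
    [AddCommGroup P] [Module k P] [AddCommGroup Q] [Module k Q]
    [AddCommGroup R] [Module k R] [AddCommGroup S] [Module k S]
    (f : M →ₗ[k] P →ₗ[k] R) (g : N →ₗ[k] Q →ₗ[k] S) :
    M ⊗[k] N →ₗ[k] P ⊗[k] Q →ₗ[k] R ⊗[k] S :=
  (TensorProduct.homTensorHomMap (RingHom.id k) P Q R S).comp (TensorProduct.map f g)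

/-- A right `H`-comodule over the Hopf algebra `H`. -/
structure RightComodule (k H : Type*) [CommRing k] [Ring H] [HopfAlgebra k H]
    (M : Type*) [AddCommGroup M] [Module k M] where
  coact : M →ₗ[k] M ⊗[k] H
  coassoc : ∀ m, TensorProduct.assoc k M H H
        (TensorProduct.map coact LinearMap.id (coact m))
      = TensorProduct.map LinearMap.id (Coalgebra.comul (R := k) (A := H)) (coact m)
  counit_coact : ∀ m, TensorProduct.rid k M
      (TensorProduct.map LinearMap.id (Coalgebra.counit (R := k) (A := H)) (coact m)) = m

/-- A right `H`-comodule algebra: the coaction is an algebra map. -/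
structure ComoduleAlgebraStr (k H A : Type*) [CommRing k] [Ring H] [HopfAlgebra k H]
    [Ring A] [Algebra k A] extends RightComodule k H A where
  coact_mul : ∀ a b : A, coact (a * b) = coact a * coact b
  coact_one : coact 1 = 1

/-- A relative `(H,A)`-Hopf module. -/
structure RelHopfModuleCl (k H A : Type*) [CommRing k] [Ring H] [HopfAlgebra k H]
    [Ring A] [Algebra k A] (AA : ComoduleAlgebraStr k H A)
    (M : Type*) [AddCommGroup M] [Module k M] where
  act : M →ₗ[k] A →ₗ[k] M
  act_act : ∀ (m : M) (a b : A), act (act m a) b = act m (a * b)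
  act_one : ∀ m : M, act m 1 = m
  coact : M →ₗ[k] M ⊗[k] H
  coassoc : ∀ m, TensorProduct.assoc k M H H
        (TensorProduct.map coact LinearMap.id (coact m))
      = TensorProduct.map LinearMap.id (Coalgebra.comul (R := k) (A := H)) (coact m)
  counit_coact : ∀ m, TensorProduct.rid k M
      (TensorProduct.map LinearMap.id (Coalgebra.counit (R := k) (A := H)) (coact m)) = m
  compat : ∀ (m : M) (a : A),
      coact (act m a) = biTensor act (LinearMap.mul k H) (coact m) (AA.coact a)


section AntipodeDev
open Coalgebra HopfAlgebra
variable {k H : Type*} [CommRing k] [Ring H] [HopfAlgebra k H]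

section Conv
variable {B : Type*} [Ring B] [Algebra k B]

def conv (f g : H →ₗ[k] B) : H →ₗ[k] B :=
  LinearMap.mul' k B ∘ₗ TensorProduct.map f g ∘ₗ Coalgebra.comul

lemma conv_apply_repr (f g : H →ₗ[k] B) {a : H} {ι : Type*} (r : Coalgebra.Repr k a ι) :
    conv f g a = ∑ i ∈ r.index, f (r.left i) * g (r.right i) := by
  simp only [conv, LinearMap.comp_apply, ← r.eq, map_sum, TensorProduct.map_tmul,
    LinearMap.mul'_apply]

lemma counit_smul_right_sum {a : H} {ι : Type*} (r : Coalgebra.Repr k a ι) :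
    ∑ i ∈ r.index, Coalgebra.counit (R := k) (r.left i) • r.right i = a := by
  have := congrArg (TensorProduct.lid k H) (Coalgebra.sum_counit_tmul_eq r)
  simp only [map_sum, lid_tmul] at this
  simpa using this

lemma counit_smul_left_sum {a : H} {ι : Type*} (r : Coalgebra.Repr k a ι) :
    ∑ i ∈ r.index, Coalgebra.counit (R := k) (r.right i) • r.left i = a := by
  have := congrArg (TensorProduct.rid k H) (Coalgebra.sum_tmul_counit_eq r)
  simp only [map_sum, rid_tmul] at this
  simpa using this

def convOne : H →ₗ[k] B := Algebra.linearMap k B ∘ₗ Coalgebra.counit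

lemma one_conv (f : H →ₗ[k] B) : conv convOne f = f := by
  ext a
  rw [conv_apply_repr (r := ℛ k a)]
  calc ∑ i ∈ (ℛ k a).index, convOne ((ℛ k a).left i) * f ((ℛ k a).right i)
      = ∑ i ∈ (ℛ k a).index, counit (R := k) ((ℛ k a).left i) • f ((ℛ k a).right i) := by
        simp [convOne, Algebra.smul_def]
    _ = f a := by simp only [← map_smul, ← map_sum, counit_smul_right_sum]

lemma conv_one (f : H →ₗ[k] B) : conv f convOne = f := by
  ext a
  rw [conv_apply_repr (r := ℛ k a)]
  calc ∑ i ∈ (ℛ k a).index, f ((ℛ k a).left i) * convOne ((ℛ k a).right i)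
      = ∑ i ∈ (ℛ k a).index, counit (R := k) ((ℛ k a).right i) • f ((ℛ k a).left i) := by
        simp [convOne, Algebra.smul_def, Algebra.commutes, mul_comm]
    _ = f a := by simp only [← map_smul, ← map_sum, counit_smul_left_sum]

lemma conv_assoc (f g h : H →ₗ[k] B) : conv (conv f g) h = conv f (conv g h) := by
  ext a
  set r := ℛ k a
  set a₁ : (i : H × H) → Coalgebra.Repr k (r.left i) (H × H) := fun i => ℛ k (r.left i)
  set a₂ : (i : H × H) → Coalgebra.Repr k (r.right i) (H × H) := fun i => ℛ k (r.right i)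
  have key := Coalgebra.sum_tmul_tmul_eq r a₁ a₂
  have key2 := congrArg (LinearMap.mul' k B ∘ₗ (LinearMap.mul' k B).lTensor B
    ∘ₗ TensorProduct.map f (TensorProduct.map g h)) key
  simp only [map_sum, LinearMap.comp_apply, TensorProduct.map_tmul, LinearMap.lTensor_tmul,
    LinearMap.mul'_apply, LinearMap.id_apply] at key2
  rw [conv_apply_repr (r := r), conv_apply_repr (r := r)]
  calc ∑ i ∈ r.index, conv f g (r.left i) * h (r.right i)
      = ∑ i ∈ r.index, ∑ j ∈ (a₁ i).index,
          f ((a₁ i).left j) * (g ((a₁ i).right j) * h (r.right i)) := by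
        refine Finset.sum_congr rfl fun i _ => ?_
        rw [conv_apply_repr (r := a₁ i), Finset.sum_mul]
        simp [mul_assoc]
    _ = ∑ i ∈ r.index, ∑ j ∈ (a₂ i).index,
          f (r.left i) * (g ((a₂ i).left j) * h ((a₂ i).right j)) := key2
    _ = ∑ i ∈ r.index, f (r.left i) * conv g h (r.right i) := by
        refine Finset.sum_congr rfl fun i _ => ?_
        rw [conv_apply_repr (r := a₂ i), Finset.mul_sum]

lemma conv_eq_of_inv {f g d : H →ₗ[k] B} (h1 : conv d f = convOne) (h2 : conv g d = convOne) :
    f = g := by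
  have : conv g (conv d f) = conv (conv g d) f := (conv_assoc g d f).symm
  rw [h1, h2, conv_one, one_conv] at this
  exact this.symm
end Conv

lemma L0 {c : H} {ι : Type*} (rc : Coalgebra.Repr k c ι) :
    ∑ l ∈ rc.index, ((antipode (R := k) (rc.left l) : H) ⊗ₜ[k] (1 : H)) *
      Coalgebra.comul (R := k) (rc.right l) = (1 : H) ⊗ₜ[k] c := by
  set a₁ : (i : ι) → Coalgebra.Repr k (rc.left i) (H × H) := fun i => ℛ k (rc.left i)
  set a₂ : (i : ι) → Coalgebra.Repr k (rc.right i) (H × H) := fun i => ℛ k (rc.right i)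
  have key := Coalgebra.sum_tmul_tmul_eq rc a₁ a₂
  have key2 := congrArg (((LinearMap.mul' k H ∘ₗ (antipode (R := k)).rTensor H).rTensor H)
    ∘ₗ (TensorProduct.assoc k H H H).symm.toLinearMap) key
  simp only [map_sum, LinearMap.comp_apply, LinearEquiv.coe_coe, assoc_symm_tmul,
    LinearMap.rTensor_tmul, LinearMap.mul'_apply] at key2
  calc ∑ l ∈ rc.index, ((antipode (R := k) (rc.left l) : H) ⊗ₜ[k] (1 : H)) *
        Coalgebra.comul (R := k) (rc.right l)
      = ∑ l ∈ rc.index, ∑ t ∈ (a₂ l).index,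
          (antipode (R := k) (rc.left l) * (a₂ l).left t) ⊗ₜ[k] (a₂ l).right t := by
        refine Finset.sum_congr rfl fun l _ => ?_
        rw [← (a₂ l).eq, Finset.mul_sum]
        simp [Algebra.TensorProduct.tmul_mul_tmul]
    _ = ∑ l ∈ rc.index, ∑ s ∈ (a₁ l).index,
          (antipode (R := k) ((a₁ l).left s) * (a₁ l).right s) ⊗ₜ[k] rc.right l := key2.symm
    _ = (1 : H) ⊗ₜ[k] c := by
        calc ∑ l ∈ rc.index, ∑ s ∈ (a₁ l).index,
              (antipode (R := k) ((a₁ l).left s) * (a₁ l).right s) ⊗ₜ[k] rc.right l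
            = ∑ l ∈ rc.index, (1 : H) ⊗ₜ[k]
                (Coalgebra.counit (R := k) (rc.left l) • rc.right l) := by
              refine Finset.sum_congr rfl fun l _ => ?_
              rw [← sum_tmul, HopfAlgebra.sum_antipode_mul_eq_algebraMap_counit (a₁ l),
                Algebra.algebraMap_eq_smul_one, smul_tmul]
          _ = (1 : H) ⊗ₜ[k] c := by rw [← tmul_sum, counit_smul_right_sum]

lemma L1 {c : H} {ι : Type*} (rc : Coalgebra.Repr k c ι) :
    ∑ l ∈ rc.index, (TensorProduct.map
        ((LinearMap.mulLeft k (rc.left l)) ∘ₗ antipode (R := k)) LinearMap.id)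
      (Coalgebra.comul (R := k) (rc.right l)) = (1 : H) ⊗ₜ[k] c := by
  set a₁ : (i : ι) → Coalgebra.Repr k (rc.left i) (H × H) := fun i => ℛ k (rc.left i)
  set a₂ : (i : ι) → Coalgebra.Repr k (rc.right i) (H × H) := fun i => ℛ k (rc.right i)
  have key := Coalgebra.sum_tmul_tmul_eq rc a₁ a₂
  have key2 := congrArg (((LinearMap.mul' k H ∘ₗ (antipode (R := k)).lTensor H).rTensor H)
    ∘ₗ (TensorProduct.assoc k H H H).symm.toLinearMap) key
  simp only [map_sum, LinearMap.comp_apply, LinearEquiv.coe_coe, assoc_symm_tmul,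
    LinearMap.rTensor_tmul, LinearMap.lTensor_tmul, LinearMap.mul'_apply] at key2
  have step1 : ∑ l ∈ rc.index, (TensorProduct.map
        ((LinearMap.mulLeft k (rc.left l)) ∘ₗ antipode (R := k)) LinearMap.id)
          (Coalgebra.comul (R := k) (rc.right l))
      = ∑ l ∈ rc.index, ∑ t ∈ (a₂ l).index,
          (rc.left l * antipode (R := k) ((a₂ l).left t)) ⊗ₜ[k] (a₂ l).right t := by
    refine Finset.sum_congr rfl fun l _ => ?_
    rw [← (a₂ l).eq, map_sum]
    simp [LinearMap.mulLeft_apply]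
  have step2 : ∑ l ∈ rc.index, ∑ s ∈ (a₁ l).index,
        ((a₁ l).left s * antipode (R := k) ((a₁ l).right s)) ⊗ₜ[k] rc.right l
      = (1 : H) ⊗ₜ[k] c := by
    calc ∑ l ∈ rc.index, ∑ s ∈ (a₁ l).index,
          ((a₁ l).left s * antipode (R := k) ((a₁ l).right s)) ⊗ₜ[k] rc.right l
        = ∑ l ∈ rc.index, (1 : H) ⊗ₜ[k]
            (Coalgebra.counit (R := k) (rc.left l) • rc.right l) := by
          refine Finset.sum_congr rfl fun l _ => ?_
          rw [← sum_tmul, HopfAlgebra.sum_mul_antipode_eq_algebraMap_counit (a₁ l),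
            Algebra.algebraMap_eq_smul_one, smul_tmul]
      _ = (1 : H) ⊗ₜ[k] c := by rw [← tmul_sum, counit_smul_right_sum]
  rw [step1, ← key2, step2]

lemma comul_algebraMap (r : k) :
    Coalgebra.comul (R := k) (algebraMap k H r) = algebraMap k (H ⊗[k] H) r := by
  rw [Algebra.algebraMap_eq_smul_one, map_smul, Bialgebra.comul_one,
    Algebra.algebraMap_eq_smul_one]

lemma convOne_apply (a : H) :
    (convOne : H →ₗ[k] H ⊗[k] H) a = algebraMap k (H ⊗[k] H) (Coalgebra.counit (R := k) a) := rfl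

/-- `Δ ⋆ (Δ ∘ S) = 1` -/
lemma conv_comul_comulS :
    conv (Coalgebra.comul (R := k) (A := H))
      (Coalgebra.comul (R := k) (A := H) ∘ₗ antipode (R := k)) = convOne := by
  ext a
  rw [conv_apply_repr (r := ℛ k a), convOne_apply]
  calc ∑ i ∈ (ℛ k a).index, Coalgebra.comul (R := k) ((ℛ k a).left i) *
        (Coalgebra.comul (R := k) ∘ₗ antipode (R := k)) ((ℛ k a).right i)
      = Coalgebra.comul (R := k)
          (∑ i ∈ (ℛ k a).index, (ℛ k a).left i * antipode (R := k) ((ℛ k a).right i)) := by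
        rw [map_sum]
        exact Finset.sum_congr rfl fun i _ => (Bialgebra.comul_mul _ _).symm
    _ = algebraMap k (H ⊗[k] H) (Coalgebra.counit (R := k) a) := by
        rw [HopfAlgebra.sum_mul_antipode_eq_algebraMap_counit (ℛ k a), comul_algebraMap]

/-- the candidate for `Δ ∘ S`: twisted comultiplication of antipodes -/
def Gmap : H →ₗ[k] H ⊗[k] H :=
  (TensorProduct.comm k H H).toLinearMap ∘ₗ TensorProduct.map (antipode (R := k))
    (antipode (R := k)) ∘ₗ Coalgebra.comul

/-- `G ⋆ Δ = 1` -/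
lemma conv_Gmap_comul :
    conv (Gmap (k := k) (H := H)) (Coalgebra.comul (R := k) (A := H)) = convOne := by
  ext a
  rw [conv_apply_repr (r := ℛ k a), convOne_apply]
  set r := ℛ k a with hr
  set a₁ : (i : H × H) → Coalgebra.Repr k (r.left i) (H × H) := fun i => ℛ k (r.left i)
  set a₂ : (i : H × H) → Coalgebra.Repr k (r.right i) (H × H) := fun i => ℛ k (r.right i)
  set Ξ : H ⊗[k] (H ⊗[k] H) →ₗ[k] H ⊗[k] H :=
    LinearMap.mul' k (H ⊗[k] H) ∘ₗ TensorProduct.map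
      ((TensorProduct.comm k H H).toLinearMap ∘ₗ
        TensorProduct.map (antipode (R := k)) (antipode (R := k))) Coalgebra.comul
      ∘ₗ (TensorProduct.assoc k H H H).symm.toLinearMap with hΞ
  have Ξ_tmul : ∀ (p q c : H), Ξ (p ⊗ₜ[k] (q ⊗ₜ[k] c)) =
      ((antipode (R := k) q : H) ⊗ₜ[k] (antipode (R := k) p : H)) *
        Coalgebra.comul (R := k) c := by
    intro p q c
    simp [hΞ]
  have step1 : ∑ i ∈ r.index, Gmap (r.left i) * Coalgebra.comul (R := k) (r.right i)
      = Ξ ((Coalgebra.comul (R := k)).lTensor H (Coalgebra.comul (R := k) a)) := by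
    rw [← Coalgebra.coassoc_apply a]
    have e1 : (Coalgebra.comul (R := k)).rTensor H (Coalgebra.comul (R := k) a)
        = ∑ i ∈ r.index, Coalgebra.comul (R := k) (r.left i) ⊗ₜ[k] r.right i := by
      rw [← r.eq, map_sum]; simp
    rw [e1, map_sum, map_sum]
    refine Finset.sum_congr rfl fun i _ => ?_
    rw [← (a₁ i).eq]
    rw [sum_tmul, map_sum, map_sum]
    have : ∀ j ∈ (a₁ i).index, Ξ ((TensorProduct.assoc k H H H)
        (((a₁ i).left j ⊗ₜ[k] (a₁ i).right j) ⊗ₜ[k] r.right i))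
        = ((antipode (R := k) ((a₁ i).right j) : H) ⊗ₜ[k]
            (antipode (R := k) ((a₁ i).left j) : H)) *
          Coalgebra.comul (R := k) (r.right i) := by
      intro j _
      rw [assoc_tmul, Ξ_tmul]
    rw [Finset.sum_congr rfl this, ← Finset.sum_mul]
    congr 1
    rw [Gmap, LinearMap.comp_apply, LinearMap.comp_apply, ← (a₁ i).eq, map_sum, map_sum]
    simp
  have step2 : (Coalgebra.comul (R := k)).lTensor H (Coalgebra.comul (R := k) a)
      = ∑ i ∈ r.index, r.left i ⊗ₜ[k] Coalgebra.comul (R := k) (r.right i) := by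
    rw [← r.eq, map_sum]; simp
  have step3 : ∀ i ∈ r.index, Ξ (r.left i ⊗ₜ[k] Coalgebra.comul (R := k) (r.right i))
      = ((1 : H) ⊗ₜ[k] (antipode (R := k) (r.left i) : H)) * ((1 : H) ⊗ₜ[k] r.right i) := by
    intro i _
    rw [← L0 (a₂ i), Finset.mul_sum, ← (a₂ i).eq]
    rw [tmul_sum, map_sum]
    refine Finset.sum_congr rfl fun l _ => ?_
    rw [Ξ_tmul, ← mul_assoc, Algebra.TensorProduct.tmul_mul_tmul, one_mul, mul_one]
  rw [step1, step2, map_sum, Finset.sum_congr rfl step3]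
  have : ∀ i ∈ r.index, ((1 : H) ⊗ₜ[k] (antipode (R := k) (r.left i) : H)) *
      ((1 : H) ⊗ₜ[k] r.right i) = (1 : H) ⊗ₜ[k] (antipode (R := k) (r.left i) * r.right i) := by
    intro i _
    rw [Algebra.TensorProduct.tmul_mul_tmul, one_mul]
  rw [Finset.sum_congr rfl this, ← tmul_sum, HopfAlgebra.sum_antipode_mul_eq_algebraMap_counit r,
    Algebra.algebraMap_eq_smul_one, tmul_smul, Algebra.algebraMap_eq_smul_one,
    Algebra.TensorProduct.one_def]

/-- The antipode is an anti-coalgebra morphism. -/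
theorem antipode_comul_eq (a : H) :
    Coalgebra.comul (R := k) (antipode (R := k) a : H) =
      (TensorProduct.comm k H H) (TensorProduct.map (antipode (R := k)) (antipode (R := k))
        (Coalgebra.comul (R := k) a)) := by
  have : (Coalgebra.comul (R := k) (A := H)) ∘ₗ antipode (R := k) = Gmap :=
    conv_eq_of_inv conv_comul_comulS conv_Gmap_comul
  exact congrFun (congrArg DFunLike.coe this) a

end AntipodeDev
section HopfModuleDev
open Coalgebra HopfAlgebra

variable {k H A : Type*} [CommRing k] [Ring H] [HopfAlgebra k H] [Ring A] [Algebra k A]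
variable {AA : ComoduleAlgebraStr k H A} {M : Type*} [AddCommGroup M] [Module k M]

/-- auxiliary map `(m ⊗ u) ⊗ v ↦ m · φ(S(u) v)` -/
def sig (Mm : RelHopfModuleCl k H A AA M) (φ : H →ₗ[k] A) :
    (M ⊗[k] H) ⊗[k] H →ₗ[k] M :=
  TensorProduct.lift Mm.act
    ∘ₗ (φ ∘ₗ LinearMap.mul' k H ∘ₗ (antipode (R := k)).rTensor H).lTensor M
    ∘ₗ (TensorProduct.assoc k M H H).toLinearMap

/-- the retraction `m ⊗ h ↦ m₀ · φ(S(m₁) h)` -/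
def lam (Mm : RelHopfModuleCl k H A AA M) (φ : H →ₗ[k] A) : M ⊗[k] H →ₗ[k] M :=
  sig Mm φ ∘ₗ Mm.coact.rTensor H

variable (Mm : RelHopfModuleCl k H A AA M) (φ : H →ₗ[k] A)

lemma lam_tmul_sig (m : M) (h : H) :
    lam Mm φ (m ⊗ₜ[k] h) = sig Mm φ (Mm.coact m ⊗ₜ[k] h) := by
  simp [lam, LinearMap.rTensor_tmul]

lemma lam_tmul {m : M} (h : H) {ι : Type*} {s : Finset ι} {mi : ι → M} {hi : ι → H}
    (hrep : Mm.coact m = ∑ i ∈ s, mi i ⊗ₜ[k] hi i) :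
    lam Mm φ (m ⊗ₜ[k] h)
      = ∑ i ∈ s, Mm.act (mi i) (φ (antipode (R := k) (hi i) * h)) := by
  rw [lam_tmul_sig, hrep, sum_tmul, map_sum]
  refine Finset.sum_congr rfl fun i _ => ?_
  simp [sig]

lemma Mcounit_sum {m : M} {ι : Type*} {s : Finset ι} {mi : ι → M} {hi : ι → H}
    (hrep : Mm.coact m = ∑ i ∈ s, mi i ⊗ₜ[k] hi i) :
    ∑ i ∈ s, Coalgebra.counit (R := k) (hi i) • mi i = m := by
  have h0 := Mm.counit_coact m
  rw [hrep, map_sum, map_sum] at h0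
  simpa using h0

lemma Mcoassoc_sum {m : M} {ι : Type*} {s : Finset ι} {mi : ι → M} {hi : ι → H}
    (hrep : Mm.coact m = ∑ i ∈ s, mi i ⊗ₜ[k] hi i) :
    ∑ i ∈ s, Mm.coact (mi i) ⊗ₜ[k] hi i
      = (TensorProduct.assoc k M H H).symm
          (∑ i ∈ s, mi i ⊗ₜ[k] Coalgebra.comul (R := k) (hi i)) := by
  have h0 := Mm.coassoc m
  rw [hrep, map_sum, map_sum] at h0
  rw [LinearEquiv.eq_symm_apply, map_sum]
  simpa using h0

lemma lam_coact (hφ1 : φ 1 = 1) (m : M) : lam Mm φ (Mm.coact m) = m := by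
  obtain ⟨sf, hsf⟩ := TensorProduct.exists_finset (R := k) (Mm.coact m)
  calc lam Mm φ (Mm.coact m)
      = ∑ p ∈ sf, sig Mm φ (Mm.coact p.1 ⊗ₜ[k] p.2) := by
        rw [hsf, map_sum]
        exact Finset.sum_congr rfl fun p _ => lam_tmul_sig Mm φ p.1 p.2
    _ = sig Mm φ ((TensorProduct.assoc k M H H).symm
          (∑ p ∈ sf, p.1 ⊗ₜ[k] Coalgebra.comul (R := k) p.2)) := by
        rw [← map_sum, Mcoassoc_sum Mm hsf]
    _ = ∑ p ∈ sf, Coalgebra.counit (R := k) p.2 • p.1 := by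
        rw [map_sum, map_sum]
        refine Finset.sum_congr rfl fun p _ => ?_
        rw [sig]
        simp only [LinearMap.comp_apply, LinearEquiv.coe_coe, LinearEquiv.apply_symm_apply,
          LinearMap.lTensor_tmul, HopfAlgebra.mul_antipode_rTensor_comul_apply,
          Algebra.algebraMap_eq_smul_one, map_smul, hφ1, lift.tmul]
        rw [Mm.act_one]
    _ = m := Mcounit_sum Mm hsf

lemma lam_comod
    (hφ : ∀ h, AA.coact (φ h)
        = TensorProduct.map φ LinearMap.id (Coalgebra.comul (R := k) (A := H) h))
    (m : M) (h : H) :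
    Mm.coact (lam Mm φ (m ⊗ₜ[k] h))
      = (lam Mm φ).rTensor H
          ((TensorProduct.assoc k M H H).symm (m ⊗ₜ[k] Coalgebra.comul (R := k) h)) := by
  obtain ⟨sf, hsf⟩ := TensorProduct.exists_finset (R := k) (Mm.coact m)
  set D := biTensor Mm.act (LinearMap.mul k H) with hD
  have D_tmul : ∀ (m' : M) (x : H) (a : A) (y : H),
      D (m' ⊗ₜ[k] x) (a ⊗ₜ[k] y) = Mm.act m' a ⊗ₜ[k] (x * y) := by
    intro m' x a y
    simp [hD, biTensor]
  set κ : H ⊗[k] H →ₗ[k] A ⊗[k] H :=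
    TensorProduct.map φ LinearMap.id
      ∘ₗ LinearMap.mulRight k (Coalgebra.comul (R := k) h)
      ∘ₗ (TensorProduct.comm k H H).toLinearMap
      ∘ₗ TensorProduct.map (antipode (R := k)) (antipode (R := k)) with hκ
  set ξ : H →ₗ[k] A ⊗[k] H :=
    TensorProduct.map φ LinearMap.id
      ∘ₗ LinearMap.mulRight k (Coalgebra.comul (R := k) h)
      ∘ₗ ((TensorProduct.mk k H H).flip 1) ∘ₗ antipode (R := k) with hξ
  have SL : ∀ (m' : M) (x c : H) (u : H ⊗[k] H),
      D (m' ⊗ₜ[k] x) ((TensorProduct.map φ LinearMap.id) (((1 : H) ⊗ₜ[k] c) * u))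
        = D (m' ⊗ₜ[k] (x * c)) ((TensorProduct.map φ LinearMap.id) u) := by
    intro m' x c u
    induction u using TensorProduct.induction_on with
    | zero => simp
    | tmul a b =>
        rw [Algebra.TensorProduct.tmul_mul_tmul, one_mul]
        simp only [TensorProduct.map_tmul, LinearMap.id_coe, id_eq, D_tmul, mul_assoc]
    | add u v hu hv => simp only [mul_add, map_add, LinearMap.map_add, hu, hv]
  have stepE : ∀ (m' : M) (l : H) (w : H ⊗[k] H),
      D (m' ⊗ₜ[k] l) (κ w)
        = TensorProduct.lift ((D ∘ₗ TensorProduct.mk k M H m').compl₂ ξ)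
            ((TensorProduct.map (LinearMap.mulLeft k l ∘ₗ antipode (R := k))
              LinearMap.id) w) := by
    intro m' l w
    induction w using TensorProduct.induction_on with
    | zero => simp
    | tmul c d =>
        have hκc : κ (c ⊗ₜ[k] d)
            = (TensorProduct.map φ LinearMap.id)
                (((antipode (R := k) d : H) ⊗ₜ[k] (antipode (R := k) c : H))
                  * Coalgebra.comul (R := k) h) := by
          simp [hκ, LinearMap.mulRight_apply]
        have hsplit : ((antipode (R := k) d : H) ⊗ₜ[k] (antipode (R := k) c : H))
              * Coalgebra.comul (R := k) h
            = ((1 : H) ⊗ₜ[k] (antipode (R := k) c : H))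
              * (((antipode (R := k) d : H) ⊗ₜ[k] (1 : H))
                  * Coalgebra.comul (R := k) h) := by
          rw [← mul_assoc, Algebra.TensorProduct.tmul_mul_tmul, one_mul, mul_one]
        rw [hκc, hsplit, SL]
        simp [hξ, LinearMap.mulRight_apply]
    | add u v hu hv => simp only [map_add, LinearMap.map_add, hu, hv]
  have lhs1 : Mm.coact (lam Mm φ (m ⊗ₜ[k] h))
      = ∑ p ∈ sf, D (Mm.coact p.1) (κ (Coalgebra.comul (R := k) p.2)) := by
    rw [lam_tmul Mm φ h hsf, map_sum]
    refine Finset.sum_congr rfl fun p _ => ?_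
    rw [Mm.compat, hφ, ← hD]
    congr 1
    rw [Bialgebra.comul_mul, antipode_comul_eq]
    simp [hκ, LinearMap.mulRight_apply]
  set rh : (p : M × H) → Coalgebra.Repr k p.2 (H × H) := fun p => ℛ k p.2 with hrh
  set TL : (M ⊗[k] H) ⊗[k] (H ⊗[k] H) →ₗ[k] M ⊗[k] H :=
    TensorProduct.lift (D.compl₂ κ) with hTL
  have TL_tmul : ∀ u w, TL (u ⊗ₜ[k] w) = D u (κ w) := by
    intro u w; simp [hTL]
  have regroup : ∑ p ∈ sf, Mm.coact p.1 ⊗ₜ[k] Coalgebra.comul (R := k) p.2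
      = ∑ p ∈ sf, ∑ j ∈ (rh p).index,
          (p.1 ⊗ₜ[k] (rh p).left j) ⊗ₜ[k] Coalgebra.comul (R := k) ((rh p).right j) := by
    have h1 := Mcoassoc_sum Mm hsf
    have h2 := congrArg ((Coalgebra.comul (R := k) (A := H)).lTensor (M ⊗[k] H)) h1
    have h3 : (TensorProduct.assoc k M H H).symm
          (∑ p ∈ sf, p.1 ⊗ₜ[k] Coalgebra.comul (R := k) p.2)
        = ∑ p ∈ sf, ∑ j ∈ (rh p).index,
            (p.1 ⊗ₜ[k] (rh p).left j) ⊗ₜ[k] (rh p).right j := by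
      rw [map_sum]
      refine Finset.sum_congr rfl fun p _ => ?_
      rw [← (rh p).eq, tmul_sum, map_sum]
      exact Finset.sum_congr rfl fun j _ => by rw [assoc_symm_tmul]
    rw [h3] at h2
    simpa only [map_sum, LinearMap.lTensor_tmul] using h2
  have stepG : ∀ w : H ⊗[k] H,
      ∑ p ∈ sf, D (p.1 ⊗ₜ[k] (1 : H))
          ((TensorProduct.map φ LinearMap.id)
            (((antipode (R := k) p.2 : H) ⊗ₜ[k] (1 : H)) * w))
        = (lam Mm φ).rTensor H ((TensorProduct.assoc k M H H).symm (m ⊗ₜ[k] w)) := by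
    intro w
    induction w using TensorProduct.induction_on with
    | zero => simp
    | tmul u v =>
        rw [assoc_symm_tmul, LinearMap.rTensor_tmul, lam_tmul Mm φ u hsf, sum_tmul]
        refine Finset.sum_congr rfl fun p _ => ?_
        rw [Algebra.TensorProduct.tmul_mul_tmul, one_mul]
        simp only [TensorProduct.map_tmul, LinearMap.id_coe, id_eq, D_tmul, one_mul]
    | add u v hu hv =>
        simp only [mul_add, map_add, tmul_add, Finset.sum_add_distrib, hu, hv]
  calc Mm.coact (lam Mm φ (m ⊗ₜ[k] h))
      = ∑ p ∈ sf, D (Mm.coact p.1) (κ (Coalgebra.comul (R := k) p.2)) := lhs1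
    _ = TL (∑ p ∈ sf, Mm.coact p.1 ⊗ₜ[k] Coalgebra.comul (R := k) p.2) := by
        rw [map_sum]
        exact Finset.sum_congr rfl fun p _ => (TL_tmul _ _).symm
    _ = ∑ p ∈ sf, ∑ j ∈ (rh p).index,
          D (p.1 ⊗ₜ[k] (rh p).left j)
            (κ (Coalgebra.comul (R := k) ((rh p).right j))) := by
        rw [regroup, map_sum]
        refine Finset.sum_congr rfl fun p _ => ?_
        rw [map_sum]
        exact Finset.sum_congr rfl fun j _ => TL_tmul _ _
    _ = ∑ p ∈ sf, TensorProduct.lift ((D ∘ₗ TensorProduct.mk k M H p.1).compl₂ ξ)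
          ((1 : H) ⊗ₜ[k] p.2) := by
        refine Finset.sum_congr rfl fun p _ => ?_
        rw [Finset.sum_congr rfl fun j _ =>
          stepE p.1 ((rh p).left j) (Coalgebra.comul (R := k) ((rh p).right j))]
        rw [← map_sum, L1 (rh p)]
    _ = ∑ p ∈ sf, D (p.1 ⊗ₜ[k] (1 : H))
          ((TensorProduct.map φ LinearMap.id)
            (((antipode (R := k) p.2 : H) ⊗ₜ[k] (1 : H)) * Coalgebra.comul (R := k) h)) := by
        refine Finset.sum_congr rfl fun p _ => ?_
        simp [hξ, LinearMap.mulRight_apply]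
    _ = (lam Mm φ).rTensor H
          ((TensorProduct.assoc k M H H).symm
            (m ⊗ₜ[k] Coalgebra.comul (R := k) h)) := stepG _

end HopfModuleDev

theorem relHopfModule_injective_comodule_classical
    {k H A : Type*} [CommRing k] [Ring H] [HopfAlgebra k H] [Ring A] [Algebra k A]
    (AA : ComoduleAlgebraStr k H A)
    {M N P : Type*} [AddCommGroup M] [Module k M] [AddCommGroup N] [Module k N]
    [AddCommGroup P] [Module k P]
    (Mm : RelHopfModuleCl k H A AA M)
    (φ : H →ₗ[k] A)
    (hφ : ∀ h, AA.coact (φ h)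
        = TensorProduct.map φ LinearMap.id (Coalgebra.comul (R := k) (A := H) h))
    (hφ1 : φ 1 = 1)
    (Nc : RightComodule k H N) (Pc : RightComodule k H P)
    (i : N →ₗ[k] P)
    (hi : Pc.coact.comp i = (TensorProduct.map i LinearMap.id).comp Nc.coact)
    (r : P →ₗ[k] N) (hr : r.comp i = LinearMap.id)
    (f : N →ₗ[k] M)
    (hf : Mm.coact.comp f = (TensorProduct.map f LinearMap.id).comp Nc.coact) :
    ∃ g : P →ₗ[k] M,
      Mm.coact.comp g = (TensorProduct.map g LinearMap.id).comp Pc.coact ∧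
      g.comp i = f := by
  refine ⟨lam Mm φ ∘ₗ TensorProduct.map (f ∘ₗ r) LinearMap.id ∘ₗ Pc.coact, ?_, ?_⟩
  · apply LinearMap.ext; intro p
    have lcm : Mm.coact ∘ₗ lam Mm φ
        = (lam Mm φ).rTensor H ∘ₗ (TensorProduct.assoc k M H H).symm.toLinearMap
            ∘ₗ (Coalgebra.comul (R := k) (A := H)).lTensor M := by
      apply TensorProduct.ext'
      intro m h
      simpa using lam_comod Mm φ hφ m h
    have nat : ∀ z : P ⊗[k] H,
        (TensorProduct.assoc k M H H).symm
            ((Coalgebra.comul (R := k) (A := H)).lTensor M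
              ((TensorProduct.map (f ∘ₗ r) LinearMap.id) z))
          = ((TensorProduct.map (f ∘ₗ r) LinearMap.id).rTensor H)
              ((TensorProduct.assoc k P H H).symm
                ((Coalgebra.comul (R := k) (A := H)).lTensor P z)) := by
      intro z
      induction z using TensorProduct.induction_on with
      | zero => simp
      | tmul p' h =>
          simp only [TensorProduct.map_tmul, LinearMap.lTensor_tmul, LinearMap.id_coe, id_eq]
          generalize Coalgebra.comul (R := k) h = w
          induction w using TensorProduct.induction_on with
          | zero => simp
          | tmul u v => simp [assoc_symm_tmul]
          | add a b ha hb => simp only [tmul_add, map_add, ha, hb]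
      | add a b ha hb => simp only [map_add, ha, hb]
    have pc : (TensorProduct.assoc k P H H).symm
          ((Coalgebra.comul (R := k) (A := H)).lTensor P (Pc.coact p))
        = (Pc.coact).rTensor H (Pc.coact p) := by
      rw [LinearEquiv.symm_apply_eq]
      exact (Pc.coassoc p).symm
    calc Mm.coact ((lam Mm φ ∘ₗ TensorProduct.map (f ∘ₗ r) LinearMap.id ∘ₗ Pc.coact) p)
        = (Mm.coact ∘ₗ lam Mm φ)
            ((TensorProduct.map (f ∘ₗ r) LinearMap.id) (Pc.coact p)) := rfl
      _ = (lam Mm φ).rTensor H ((TensorProduct.assoc k M H H).symm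
            ((Coalgebra.comul (R := k) (A := H)).lTensor M
              ((TensorProduct.map (f ∘ₗ r) LinearMap.id) (Pc.coact p)))) := by
          rw [lcm]; rfl
      _ = (lam Mm φ).rTensor H (((TensorProduct.map (f ∘ₗ r) LinearMap.id).rTensor H)
            ((TensorProduct.assoc k P H H).symm
              ((Coalgebra.comul (R := k) (A := H)).lTensor P (Pc.coact p)))) := by
          rw [nat]
      _ = (lam Mm φ).rTensor H (((TensorProduct.map (f ∘ₗ r) LinearMap.id).rTensor H)
            ((Pc.coact).rTensor H (Pc.coact p))) := by rw [pc]
      _ = ((lam Mm φ ∘ₗ TensorProduct.map (f ∘ₗ r) LinearMap.id ∘ₗ Pc.coact).rTensor H)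
            (Pc.coact p) := by
          rw [LinearMap.rTensor_comp, LinearMap.rTensor_comp]; rfl
      _ = (TensorProduct.map (lam Mm φ ∘ₗ TensorProduct.map (f ∘ₗ r) LinearMap.id ∘ₗ Pc.coact)
            LinearMap.id) (Pc.coact p) := rfl
  · apply LinearMap.ext; intro n
    have h1 : Pc.coact (i n) = TensorProduct.map i LinearMap.id (Nc.coact n) :=
      LinearMap.congr_fun hi n
    have h2 : (TensorProduct.map (f ∘ₗ r) LinearMap.id)
          ((TensorProduct.map i LinearMap.id) (Nc.coact n))
        = (TensorProduct.map f LinearMap.id) (Nc.coact n) := by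
      rw [← LinearMap.comp_apply, ← TensorProduct.map_comp]
      have e1 : (f ∘ₗ r) ∘ₗ i = f := by
        rw [LinearMap.comp_assoc, hr, LinearMap.comp_id]
      have e2 : (LinearMap.id : H →ₗ[k] H) ∘ₗ LinearMap.id = LinearMap.id :=
        LinearMap.comp_id _
      rw [e1, e2]
    have h3 : (TensorProduct.map f LinearMap.id) (Nc.coact n) = Mm.coact (f n) :=
      (LinearMap.congr_fun hf n).symm
    show lam Mm φ ((TensorProduct.map (f ∘ₗ r) LinearMap.id) (Pc.coact (i n))) = f n
    rw [h1, h2, h3, lam_coact Mm φ hφ1]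

end
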